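/- arXiv:1010.2376 — 2 statements merged into one kernel-verified Lean document; each statement's English description precedes it below -/
import Mathlib

section
/- For every real number Y there exist a constant ρ > 0 and a time t₀ ≥ 2 such that for all t ≥ t₀, e^{t} ∫_{(3/(2√2))·log t − Y}^{∞} x² · e^{−2√2·x} · e^{−(√2·t − x)²/(2t)} · (1/√(2πt)) dx ≤ ρ · t^{−1/2}. In particular, the left-hand side tends to 0 as t → ∞. -/
/-!
Completing the square, `t - 2√2 x - (√2 t - x)² / (2t) = -√2 x - x² / (2t) ≤ -√2 x`, so the
factor `e^t` is absorbed and the integrand is at most `x² e^{-√2 x} / √(2πt)`. The lower limit of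
integration increases with `t`, so for `t ≥ 2` the remaining integral is bounded by the finite
integral of `x² e^{-√2 x}` over `((3/(2√2)) log 2 - Y, ∞)`, and only the factor `t^{-1/2}` is left.
-/

open MeasureTheory Real Filter Topology

/-- The left-hand side of the Gaussian integral estimate (3.2)-(3.3):
`e^t ∫_{(3/(2√2))log t − Y}^{∞} x² e^{−2√2 x} e^{−(√2 t − x)²/(2t)} (1/√(2πt)) dx`. -/
noncomputable def gaussianEstimateLHS (Y t : ℝ) : ℝ :=
  Real.exp t *
    ∫ x in Set.Ioi (3 / (2 * Real.sqrt 2) * Real.log t - Y),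
      x ^ 2 * Real.exp (-(2 * Real.sqrt 2) * x) *
        Real.exp (-(Real.sqrt 2 * t - x) ^ 2 / (2 * t)) * (1 / Real.sqrt (2 * Real.pi * t))

open Set Asymptotics

theorem integrableOn_pow_mul_exp_neg_mul_Ioi (n : ℕ) {b : ℝ} (hb : 0 < b) (a : ℝ) :
    IntegrableOn (fun x : ℝ => x ^ n * exp (-b * x)) (Ioi a) := by
  refine integrable_of_isBigO_exp_neg (half_pos hb) (by fun_prop) ?_
  refine ((isLittleO_pow_exp_pos_mul_atTop n (half_pos hb)).isBigO.mul
    (isBigO_refl (fun x : ℝ => exp (-b * x)) atTop)).congr_right fun x => ?_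
  rw [← exp_add]
  ring_nf

theorem exp_mul_exp_neg_two_sqrt_two_mul_mul_exp_le {t : ℝ} (ht : 0 < t) (x : ℝ) :
    exp t * exp (-(2 * √2) * x) * exp (-(√2 * t - x) ^ 2 / (2 * t)) ≤ exp (-√2 * x) := by
  have hexponent : t + -(2 * √2) * x + -(√2 * t - x) ^ 2 / (2 * t) = -√2 * x - x ^ 2 / (2 * t) := by
    field_simp
    ring_nf
    rw [sq_sqrt zero_le_two]
    ring
  rw [← exp_add, ← exp_add, exp_le_exp, hexponent]
  have : 0 ≤ x ^ 2 / (2 * t) := by positivity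
  linarith

theorem gaussianEstimateLHS_nonneg (Y t : ℝ) : 0 ≤ gaussianEstimateLHS Y t :=
  mul_nonneg (exp_nonneg _) (setIntegral_nonneg measurableSet_Ioi fun x _ => by positivity)

theorem gaussianEstimateLHS_le {t : ℝ} (ht : 0 < t) (Y : ℝ) :
    gaussianEstimateLHS Y t ≤
      (∫ x in Ioi (3 / (2 * √2) * log t - Y), x ^ 2 * exp (-√2 * x)) / √(2 * π * t) := by
  rw [gaussianEstimateLHS, ← integral_const_mul, ← integral_div]
  refine integral_mono_of_nonneg (.of_forall fun x => by positivity)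
    ((integrableOn_pow_mul_exp_neg_mul_Ioi 2 (by positivity) _).div_const _)
    (.of_forall fun x => ?_)
  calc exp t * (x ^ 2 * exp (-(2 * √2) * x) * exp (-(√2 * t - x) ^ 2 / (2 * t)) *
        (1 / √(2 * π * t)))
      = x ^ 2 * (exp t * exp (-(2 * √2) * x) * exp (-(√2 * t - x) ^ 2 / (2 * t))) /
          √(2 * π * t) := by
        ring
    _ ≤ x ^ 2 * exp (-√2 * x) / √(2 * π * t) := by
        gcongr
        exact exp_mul_exp_neg_two_sqrt_two_mul_mul_exp_le ht x

theorem gaussianEstimateLHS_le_mul_rpow (Y : ℝ) {t : ℝ} (ht : 2 ≤ t) :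
    gaussianEstimateLHS Y t ≤
      (∫ x in Ioi (3 / (2 * √2) * log 2 - Y), x ^ 2 * exp (-√2 * x)) / √(2 * π) *
        t ^ (-(1 : ℝ) / 2) := by
  have ht0 : 0 < t := by linarith
  have htail : (∫ x in Ioi (3 / (2 * √2) * log t - Y), x ^ 2 * exp (-√2 * x)) ≤
      ∫ x in Ioi (3 / (2 * √2) * log 2 - Y), x ^ 2 * exp (-√2 * x) := by
    refine setIntegral_mono_set (integrableOn_pow_mul_exp_neg_mul_Ioi 2 (by positivity) _)
      (.of_forall fun x => by positivity) (LE.le.eventuallyLE (Ioi_subset_Ioi ?_))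
    gcongr
  have hrpow : t ^ (-(1 : ℝ) / 2) = 1 / √t := by
    rw [sqrt_eq_rpow, one_div, ← rpow_neg ht0.le, neg_div]
  calc gaussianEstimateLHS Y t
      ≤ (∫ x in Ioi (3 / (2 * √2) * log t - Y), x ^ 2 * exp (-√2 * x)) / √(2 * π * t) :=
        gaussianEstimateLHS_le ht0 Y
    _ ≤ (∫ x in Ioi (3 / (2 * √2) * log 2 - Y), x ^ 2 * exp (-√2 * x)) / √(2 * π * t) := by
        gcongr
    _ = _ := by
        rw [hrpow, sqrt_mul (by positivity)]
        field_simp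

theorem stmt_0 (Y : ℝ) :
    (∃ ρ > (0 : ℝ), ∃ t₀ ≥ (2 : ℝ), ∀ t ≥ t₀,
      gaussianEstimateLHS Y t ≤ ρ * t ^ (-(1 : ℝ) / 2)) ∧
    Tendsto (fun t => gaussianEstimateLHS Y t) atTop (𝓝 0) := by
  set C := ∫ x in Ioi (3 / (2 * √2) * log 2 - Y), x ^ 2 * exp (-√2 * x)
  have hC : 0 ≤ C := setIntegral_nonneg measurableSet_Ioi fun x _ => by positivity
  have hρ : 0 < (C + 1) / √(2 * π) := by positivity
  have hbound : ∀ t ≥ 2, gaussianEstimateLHS Y t ≤ (C + 1) / √(2 * π) * t ^ (-(1 : ℝ) / 2) :=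
    fun t ht => (gaussianEstimateLHS_le_mul_rpow Y ht).trans (by gcongr; linarith)
  refine ⟨⟨_, hρ, 2, le_rfl, hbound⟩, ?_⟩
  have hdecay : Tendsto (fun t : ℝ => (C + 1) / √(2 * π) * t ^ (-(1 : ℝ) / 2)) atTop (𝓝 0) := by
    simpa [neg_div] using (tendsto_rpow_neg_atTop one_half_pos).const_mul ((C + 1) / √(2 * π))
  exact squeeze_zero' (.of_forall (gaussianEstimateLHS_nonneg Y))
    ((eventually_ge_atTop 2).mono hbound) hdecay
end

section
/- For every y ∈ ℝ, lim_{r → ∞} (1/r^{3/2}) ∫_{y + (3/(2√2))·log r}^{∞} X · exp((3/(2√2))·X·(log r)/r − X²/(2r)) dX = 0. -/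
open MeasureTheory Real Filter Topology Set

/-!
For `r` large enough that `(c log r)² ≤ r` (with `c = 3/(2√2)`), completing the square gives
`c X log r / r - X²/(2r) ≤ 1 - X²/(4r)`, so the integral is at most
`e ∫₀^∞ X e^{-X²/(4r)} dX = 2er`. Hence the expression lies between `0` and `2e r^{-1/2}`.
-/

theorem integral_Ioi_mul_exp_neg_mul_sq {b : ℝ} (hb : 0 < b) :
    ∫ x in Ioi (0 : ℝ), x * exp (-b * x ^ 2) = (2 * b)⁻¹ := by
  have h := integral_mul_cexp_neg_mul_sq (b := (b : ℂ)) (by simpa using hb)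
  rw [← Complex.ofReal_inj, ← integral_complex_ofReal]
  push_cast
  exact h

section GaussianTilt

variable {β r : ℝ}

theorem linear_sub_sq_le_one_sub_sq (hr : 0 < r) (hβ : β ^ 2 ≤ r) (X : ℝ) :
    β * X / r - X ^ 2 / (2 * r) ≤ 1 + -(4 * r)⁻¹ * X ^ 2 := by
  have h : 0 ≤ (X - 2 * β) ^ 2 + 4 * (r - β ^ 2) := add_nonneg (sq_nonneg _) (by linarith)
  have h_eq : 1 + -(4 * r)⁻¹ * X ^ 2 - (β * X / r - X ^ 2 / (2 * r))
      = ((X - 2 * β) ^ 2 + 4 * (r - β ^ 2)) / (4 * r) := by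
    field_simp
    ring
  linarith [div_nonneg h (by positivity : (0 : ℝ) ≤ 4 * r)]

theorem mul_exp_le_exp_one_mul_mul_exp (hr : 0 < r) (hβ : β ^ 2 ≤ r) {X : ℝ} (hX : 0 ≤ X) :
    X * exp (β * X / r - X ^ 2 / (2 * r)) ≤ exp 1 * (X * exp (-(4 * r)⁻¹ * X ^ 2)) := by
  calc X * exp (β * X / r - X ^ 2 / (2 * r))
      ≤ X * exp (1 + -(4 * r)⁻¹ * X ^ 2) := by
        gcongr
        exact linear_sub_sq_le_one_sub_sq hr hβ X
    _ = exp 1 * (X * exp (-(4 * r)⁻¹ * X ^ 2)) := by rw [exp_add]; ring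

theorem setIntegral_Ioi_mul_exp_le (hr : 0 < r) (hβ : β ^ 2 ≤ r) {a : ℝ} (ha : 0 ≤ a) :
    ∫ X in Ioi a, X * exp (β * X / r - X ^ 2 / (2 * r)) ≤ 2 * exp 1 * r := by
  have hg : Integrable fun X : ℝ => exp 1 * (X * exp (-(4 * r)⁻¹ * X ^ 2)) :=
    (integrable_mul_exp_neg_mul_sq (by positivity)).const_mul _
  have hle : ∀ X ∈ Ioi a, X * exp (β * X / r - X ^ 2 / (2 * r))
      ≤ exp 1 * (X * exp (-(4 * r)⁻¹ * X ^ 2)) := fun X hX =>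
    mul_exp_le_exp_one_mul_mul_exp hr hβ (ha.trans hX.le)
  have hf : IntegrableOn (fun X : ℝ => X * exp (β * X / r - X ^ 2 / (2 * r))) (Ioi a) := by
    refine hg.integrableOn.mono' (by fun_prop) ?_
    filter_upwards [ae_restrict_mem measurableSet_Ioi] with X hX
    rw [norm_of_nonneg (mul_nonneg (ha.trans hX.le) (exp_pos _).le)]
    exact hle X hX
  have hg_nonneg : 0 ≤ᵐ[volume.restrict (Ioi 0)]
      fun X : ℝ => exp 1 * (X * exp (-(4 * r)⁻¹ * X ^ 2)) := by
    filter_upwards [ae_restrict_mem measurableSet_Ioi] with X (hX : 0 < X)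
    positivity
  calc ∫ X in Ioi a, X * exp (β * X / r - X ^ 2 / (2 * r))
      ≤ ∫ X in Ioi a, exp 1 * (X * exp (-(4 * r)⁻¹ * X ^ 2)) :=
        setIntegral_mono_on hf hg.integrableOn measurableSet_Ioi hle
    _ ≤ ∫ X in Ioi 0, exp 1 * (X * exp (-(4 * r)⁻¹ * X ^ 2)) :=
        setIntegral_mono_set hg.integrableOn hg_nonneg (Ioi_subset_Ioi ha).eventuallyLE
    _ = 2 * exp 1 * r := by
        rw [integral_const_mul, integral_Ioi_mul_exp_neg_mul_sq (by positivity)]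
        field_simp
        ring

end GaussianTilt

theorem stmt_6 (y : ℝ) :
    Tendsto
      (fun r : ℝ =>
        (1 / r ^ ((3 : ℝ) / 2)) *
          ∫ X in Set.Ioi (y + 3 / (2 * Real.sqrt 2) * Real.log r),
            X * Real.exp (3 / (2 * Real.sqrt 2) * X * Real.log r / r - X ^ 2 / (2 * r)))
      atTop (𝓝 0) := by
  set c : ℝ := 3 / (2 * √2)
  have hc : 0 < c := by positivity
  have hlower : ∀ᶠ r in atTop, 0 ≤ y + c * log r :=
    tendsto_atTop_add_const_left _ y (tendsto_log_atTop.const_mul_atTop hc) |>.eventually_ge_atTop 0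
  have hsq : ∀ᶠ r in atTop, (c * log r) ^ 2 ≤ r := by
    filter_upwards [(isLittleO_pow_log_id_atTop (n := 2)).const_mul_left (c ^ 2) |>.bound one_pos,
      eventually_ge_atTop 0] with r hr hr0
    simpa [mul_pow, abs_of_nonneg hr0] using hr
  have hdecay : Tendsto (fun r : ℝ => 2 * exp 1 * r ^ ((1 : ℝ) - 3 / 2)) atTop (𝓝 0) := by
    have h := (tendsto_rpow_neg_atTop (by norm_num : (0 : ℝ) < 1 / 2)).const_mul (2 * exp 1)
    norm_num at h ⊢
    exact h
  refine tendsto_of_tendsto_of_tendsto_of_le_of_le' tendsto_const_nhds hdecay ?_ ?_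
  · filter_upwards [hlower, eventually_gt_atTop 0] with r ha hr
    refine mul_nonneg (by positivity) (setIntegral_nonneg measurableSet_Ioi fun X hX => ?_)
    exact mul_nonneg (ha.trans hX.le) (exp_pos _).le
  · filter_upwards [hlower, hsq, eventually_gt_atTop 0] with r ha hβ hr
    simp_rw [show ∀ X, c * X * log r / r = c * log r * X / r from fun X => by ring]
    calc 1 / r ^ ((3 : ℝ) / 2) * ∫ X in Ioi (y + c * log r),
          X * exp (c * log r * X / r - X ^ 2 / (2 * r))
        ≤ 1 / r ^ ((3 : ℝ) / 2) * (2 * exp 1 * r) := by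
          gcongr
          exact setIntegral_Ioi_mul_exp_le hr hβ ha
      _ = 2 * exp 1 * r ^ ((1 : ℝ) - 3 / 2) := by
          rw [rpow_sub hr, rpow_one]
          ring
end
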